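/- For any integer k ≥ 1, if n is a positive integer with σ(n) = k·n and n > 1, then H_{τ(n)} > k strictly (where τ(n) is the number of divisors of n), since the divisor set of n is not an initial segment {1, 2, ..., τ(n)} as n | n and n > τ(n) for n > 2. -/

import Mathlib

/-!
Since `σ(n) = k n`, we have `k = ∑_{d ∣ n} 1/d`. The `i`-th smallest element of a set of positive
integers is at least `i`, so such a sum over `τ(n)` divisors is at most `H_{τ(n)}`; it is strictly
smaller because the divisor `n` exceeds `τ(n)` once `n > 2`, and `n = 2` is not multiperfect.
-/

open Finset

theorem sum_one_div_le_sum_Icc_card (S : Finset ℕ) (h0 : 0 ∉ S) :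
    ∑ d ∈ S, (1 : ℝ) / d ≤ ∑ i ∈ Icc 1 #S, (1 : ℝ) / i := by
  induction S using Finset.induction_on_max with
  | empty => simp
  | insert x s hlt ih =>
    have hx : x ∉ s := fun hx => (hlt x hx).false
    have hs0 : 0 ∉ s := fun hs => h0 (mem_insert_of_mem hs)
    have hcard : #s + 1 ≤ x := by
      have : s ⊆ Ico 1 x := fun y hy =>
        mem_Ico.mpr ⟨Nat.pos_of_ne_zero fun h => hs0 (h ▸ hy), hlt y hy⟩
      have := card_le_card this
      simp only [Nat.card_Ico] at this
      have : x ≠ 0 := fun h => h0 (h ▸ mem_insert_self x s)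
      omega
    rw [sum_insert hx, card_insert_of_notMem hx, sum_Icc_succ_top (by omega), add_comm]
    exact add_le_add (ih hs0) (one_div_le_one_div_of_le (by positivity) (by exact_mod_cast hcard))

theorem sum_one_div_lt_sum_Icc_card {S : Finset ℕ} (h0 : 0 ∉ S) {d : ℕ} (hd : d ∈ S)
    (hlt : #S < d) : ∑ d ∈ S, (1 : ℝ) / d < ∑ i ∈ Icc 1 #S, (1 : ℝ) / i := by
  calc ∑ d ∈ S, (1 : ℝ) / d = ∑ d ∈ S.erase d, (1 : ℝ) / d + 1 / d := (sum_erase_add S _ hd).symm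
    _ < ∑ i ∈ Icc 1 #(S.erase d), (1 : ℝ) / i + 1 / (#(S.erase d) + 1 : ℕ) := by
        refine add_lt_add_of_le_of_lt
          (sum_one_div_le_sum_Icc_card _ fun h => h0 (mem_of_mem_erase h)) ?_
        refine one_div_lt_one_div_of_lt (by positivity) ?_
        rw [card_erase_add_one hd]
        exact_mod_cast hlt
    _ = ∑ i ∈ Icc 1 #S, (1 : ℝ) / i := by
        rw [← sum_Icc_succ_top (by omega), card_erase_add_one hd]

theorem Nat.card_divisors_lt_self {n : ℕ} (hn : 2 < n) : #n.divisors < n := by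
  have hpred : n - 1 ∉ n.divisors := by
    intro hmem
    have hdvd : n - 1 ∣ (n - 1) + 1 := by
      rw [Nat.sub_add_cancel (by omega)]
      exact Nat.dvd_of_mem_divisors hmem
    have := Nat.le_of_dvd one_pos ((Nat.dvd_add_right dvd_rfl).mp hdvd)
    omega
  have hsub : n.divisors ⊆ (Icc 1 n).erase (n - 1) := fun d hd =>
    mem_erase.mpr ⟨fun h => hpred (h ▸ hd),
      mem_Icc.mpr ⟨Nat.pos_of_mem_divisors hd, Nat.divisor_le hd⟩⟩
  calc #n.divisors ≤ #((Icc 1 n).erase (n - 1)) := card_le_card hsub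
    _ < n := by
      rw [card_erase_of_mem (mem_Icc.mpr ⟨by omega, by omega⟩), Nat.card_Icc]
      omega

theorem Nat.sum_divisors_one_div (n : ℕ) :
    ∑ d ∈ n.divisors, (1 : ℝ) / d = (∑ d ∈ n.divisors, d : ℕ) / n := by
  rw [← Nat.sum_div_divisors, Nat.cast_sum, sum_div]
  refine sum_congr rfl fun d hd => ?_
  rw [Nat.cast_div (Nat.dvd_of_mem_divisors hd) (by exact_mod_cast (Nat.pos_of_mem_divisors hd).ne'),
    one_div_div]

theorem stmt_19_general (n k : ℕ) (hn : 1 < n) (h : (n.divisors.sum id) = k * n) :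
    (k : ℝ) < ∑ i ∈ Finset.Icc 1 n.divisors.card, (1 : ℝ) / i := by
  have hn2 : 2 < n := by
    by_contra! hle
    obtain rfl : n = 2 := by omega
    rw [show (Nat.divisors 2).sum id = 3 by decide] at h
    omega
  have hk : (k : ℝ) = ∑ d ∈ n.divisors, (1 : ℝ) / d := by
    rw [Nat.sum_divisors_one_div, show ∑ d ∈ n.divisors, d = k * n from h]
    push_cast
    field_simp
  rw [hk]
  exact sum_one_div_lt_sum_Icc_card (by simp) (Nat.mem_divisors_self n (by omega))
    (Nat.card_divisors_lt_self hn2)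

theorem stmt_19 (n k : ℕ) (hk : 1 ≤ k) (hn : 1 < n) (h : (n.divisors.sum id) = k * n) :
    (k : ℝ) < ∑ i ∈ Finset.Icc 1 n.divisors.card, (1 : ℝ) / i :=
  stmt_19_general n k hn h
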